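/- arXiv:2001.10236 — 6 statements merged into one kernel-verified Lean document; each statement's English description precedes it below -/
import Mathlib

section
/- Let A → B → E → 0 be an exact sequence of abelian groups and let ℓ be a prime number. If the ℓ-torsion subgroup _ℓ E is finite, then the induced sequence A^(ℓ) → B^(ℓ) → E^(ℓ) → 0 of ℓ-adic completions is exact, i.e. the second map is surjective and the image of the first map equals the kernel of the second. (Lemma 'exactcomp' b), first case.) -/
/-- The subgroup `nA = {n·a : a ∈ A}` of an abelian group `A`. -/
def nSub (A : Type*) [AddCommGroup A] (n : ℕ) : AddSubgroup A where
  carrier := Set.range fun a : A => n • a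
  zero_mem' := ⟨0, smul_zero n⟩
  add_mem' := by rintro x y ⟨a, rfl⟩ ⟨b, rfl⟩; exact ⟨a + b, smul_add n a b⟩
  neg_mem' := by rintro x ⟨a, rfl⟩; exact ⟨-a, smul_neg n a⟩

theorem nSub_le {A : Type*} [AddCommGroup A] {n m : ℕ} (h : n ∣ m) :
    nSub A m ≤ nSub A n := by
  rintro x ⟨a, rfl⟩
  obtain ⟨c, rfl⟩ := h
  exact ⟨c • a, (mul_smul n c a).symm⟩

/-- The natural projection `A/mA → A/nA` when `n ∣ m`. -/
def projMap {A : Type*} [AddCommGroup A] {n m : ℕ} (h : n ∣ m) :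
    A ⧸ nSub A m →+ A ⧸ nSub A n :=
  QuotientAddGroup.map _ _ (AddMonoidHom.id A) fun _x hx => nSub_le h hx

/-- The ℓ-adic completion `A^(ℓ) = lim_m A/ℓ^m A`, as the subgroup of compatible
families in `Π m, A/ℓ^m A` (along the natural projection maps). -/
def AdicComp (ℓ : ℕ) (A : Type*) [AddCommGroup A] :
    AddSubgroup (∀ m : ℕ, A ⧸ nSub A (ℓ ^ m)) where
  carrier := {f | ∀ m : ℕ, projMap (pow_dvd_pow ℓ (Nat.le_succ m)) (f (m + 1)) = f m}
  zero_mem' := fun _m => map_zero _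
  add_mem' := by
    intro f g hf hg m
    simp only [Pi.add_apply, map_add, hf m, hg m]
  neg_mem' := by
    intro f hf m
    simp only [Pi.neg_apply, map_neg, hf m]

/-- The map `A/nA → B/nB` induced by a homomorphism `φ : A → B`. -/
def qMap {A B : Type*} [AddCommGroup A] [AddCommGroup B] (φ : A →+ B) (n : ℕ) :
    A ⧸ nSub A n →+ B ⧸ nSub B n :=
  QuotientAddGroup.map _ _ φ (by rintro x ⟨a, rfl⟩; exact ⟨φ a, by simp⟩)

theorem projMap_qMap {A B : Type*} [AddCommGroup A] [AddCommGroup B] (φ : A →+ B)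
    {n m : ℕ} (h : n ∣ m) (x : A ⧸ nSub A m) :
    projMap h (qMap φ m x) = qMap φ n (projMap h x) :=
  QuotientAddGroup.induction_on x fun _a => rfl

/-- The homomorphism `A^(ℓ) → B^(ℓ)` between ℓ-adic completions induced by a
homomorphism `φ : A → B`. -/
def adicMap {A B : Type*} [AddCommGroup A] [AddCommGroup B] (ℓ : ℕ) (φ : A →+ B) :
    ↥(AdicComp ℓ A) →+ ↥(AdicComp ℓ B) where
  toFun f := ⟨fun m => qMap φ (ℓ ^ m) (f.1 m), fun m => by
    show projMap (pow_dvd_pow ℓ (Nat.le_succ m)) (qMap φ (ℓ ^ (m + 1)) (f.1 (m + 1)))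
      = qMap φ (ℓ ^ m) (f.1 m)
    rw [projMap_qMap, f.2 m]⟩
  map_zero' := by
    apply Subtype.ext; funext m; exact map_zero _
  map_add' f g := by
    apply Subtype.ext; funext m; exact map_add _ _ _

/-!
Reduction modulo `ℓ^m` is right exact, so `A/ℓ^m → B/ℓ^m → E/ℓ^m → 0` is exact at every level.
For a surjection `φ : X → Y`, the fibres of `X/ℓ^m → Y/ℓ^m` over the components of a point of
`Y^(ℓ)` form an inverse system with surjective transition maps (kernel elements lift one level
up), so `φ^(ℓ)` is surjective. If `y ∈ B^(ℓ)` maps to `0`, its components have preimages in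
`K/ℓ^m K`, where `K = ker g`; these fibres are finite because `E[ℓ]` is, so König's lemma gives a
preimage of `y` in `K^(ℓ)`, which lifts to `A^(ℓ)` since `A → K` is surjective.
-/

open Function

section Quotient

variable {A B C : Type*} [AddCommGroup A] [AddCommGroup B] [AddCommGroup C]

theorem qMap_comp_apply (φ : A →+ B) (ψ : B →+ C) (n : ℕ) (x : A ⧸ nSub A n) :
    qMap ψ n (qMap φ n x) = qMap (ψ.comp φ) n x :=
  QuotientAddGroup.induction_on x fun _ => rfl

theorem qMap_zero_apply (n : ℕ) (x : A ⧸ nSub A n) : qMap (0 : A →+ B) n x = 0 :=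
  QuotientAddGroup.induction_on x fun _ => rfl

theorem qMap_surjective {φ : A →+ B} (hφ : Surjective φ) (n : ℕ) : Surjective (qMap φ n) :=
  fun y => QuotientAddGroup.induction_on y fun b =>
    let ⟨a, ha⟩ := hφ b
    ⟨QuotientAddGroup.mk a, congrArg QuotientAddGroup.mk ha⟩

theorem projMap_surjective {n N : ℕ} (h : n ∣ N) : Surjective (projMap (A := A) h) :=
  fun y => QuotientAddGroup.induction_on y fun a => ⟨QuotientAddGroup.mk a, rfl⟩

theorem AddMonoidHom.exact_ker_subtype (g : B →+ C) : Exact g.ker.subtype g :=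
  fun _ => ⟨fun h => ⟨⟨_, h⟩, rfl⟩, by rintro ⟨k, rfl⟩; exact k.2⟩

theorem exists_qMap_eq_of_qMap_eq_zero {f : A →+ B} {g : B →+ C} (hfg : Exact f g)
    (hg : Surjective g) {n : ℕ} {d : B ⧸ nSub B n} (hd : qMap g n d = 0) :
    ∃ a, qMap f n a = d := by
  induction d using QuotientAddGroup.induction_on with | H b => ?_
  obtain ⟨c, hc⟩ := (QuotientAddGroup.eq_zero_iff _).mp hd
  obtain ⟨b', rfl⟩ := hg c
  obtain ⟨a, ha⟩ := (hfg (b - n • b')).mp <| by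
    rw [map_sub, map_nsmul]; exact sub_eq_zero.mpr hc.symm
  refine ⟨QuotientAddGroup.mk a, QuotientAddGroup.eq_iff_sub_mem.mpr ?_⟩
  rw [ha, sub_sub_cancel_left]
  exact neg_mem ⟨b', rfl⟩

theorem exists_qMap_eq_zero_projMap_eq {φ : A →+ B} (hφ : Surjective φ) {n N : ℕ} (h : n ∣ N)
    {d : A ⧸ nSub A n} (hd : qMap φ n d = 0) :
    ∃ z : A ⧸ nSub A N, qMap φ N z = 0 ∧ projMap h z = d := by
  obtain ⟨k, rfl⟩ := exists_qMap_eq_of_qMap_eq_zero φ.exact_ker_subtype hφ hd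
  obtain ⟨k', rfl⟩ := projMap_surjective h k
  refine ⟨qMap φ.ker.subtype N k', ?_, projMap_qMap _ _ _⟩
  rw [qMap_comp_apply, φ.exact_ker_subtype.addMonoidHom_comp_eq_zero, qMap_zero_apply]

end Quotient

section InverseSystem

theorem exists_compatible_seq_of_surjective {X : ℕ → Type*} (p : ∀ n, X (n + 1) → X n)
    (hp : ∀ n, Surjective (p n)) (x₀ : X 0) :
    ∃ x : ∀ n, X n, ∀ n, p n (x (n + 1)) = x n :=
  ⟨fun n => Nat.rec x₀ (fun n xn => surjInv (hp n) xn) n, fun n => surjInv_eq (hp n) _⟩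

open CategoryTheory Opposite in
theorem exists_compatible_seq_of_finite {X : ℕ → Type*} [∀ n, Finite (X n)]
    [∀ n, Nonempty (X n)] (p : ∀ n, X (n + 1) → X n) :
    ∃ x : ∀ n, X n, ∀ n, p n (x (n + 1)) = x n := by
  let F : ℕᵒᵖ ⥤ Type _ := Functor.ofOpSequence fun n => TypeCat.ofHom (p n)
  have : ∀ j, Finite (F.obj j) := fun j => inferInstanceAs (Finite (X j.unop))
  have : ∀ j, Nonempty (F.obj j) := fun j => inferInstanceAs (Nonempty (X j.unop))
  obtain ⟨s, hs⟩ := nonempty_sections_of_finite_inverse_system F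
  refine ⟨fun n => s (op n), fun n => ?_⟩
  have := hs (homOfLE (Nat.le_add_right n 1)).op
  rwa [Functor.ofOpSequence_map_homOfLE_succ] at this

end InverseSystem

section Completion

variable {A B C : Type*} [AddCommGroup A] [AddCommGroup B] [AddCommGroup C] (ℓ : ℕ)

theorem adicMap_comp_apply (φ : A →+ B) (ψ : B →+ C) (x : AdicComp ℓ A) :
    adicMap ℓ ψ (adicMap ℓ φ x) = adicMap ℓ (ψ.comp φ) x :=
  Subtype.ext <| funext fun m => qMap_comp_apply φ ψ _ (x.1 m)

theorem adicMap_zero_apply (x : AdicComp ℓ A) : adicMap ℓ (0 : A →+ B) x = 0 :=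
  Subtype.ext <| funext fun m => qMap_zero_apply _ (x.1 m)

def adicFiber (φ : A →+ B) (y : AdicComp ℓ B) (m : ℕ) : Type _ :=
  {a : A ⧸ nSub A (ℓ ^ m) // qMap φ (ℓ ^ m) a = y.1 m}

variable {ℓ} {φ : A →+ B} {y : AdicComp ℓ B}

def adicFiber.proj (m : ℕ) (a : adicFiber ℓ φ y (m + 1)) : adicFiber ℓ φ y m :=
  ⟨projMap (pow_dvd_pow ℓ m.le_succ) a.1, by rw [← projMap_qMap, a.2, y.2 m]⟩

theorem exists_adicMap_eq_of_compatible (a : ∀ m, adicFiber ℓ φ y m)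
    (ha : ∀ m, adicFiber.proj m (a (m + 1)) = a m) : ∃ x, adicMap ℓ φ x = y :=
  ⟨⟨fun m => (a m).1, fun m => congrArg Subtype.val (ha m)⟩,
    Subtype.ext <| funext fun m => (a m).2⟩

theorem adicFiber.proj_surjective (hφ : Surjective φ) (m : ℕ) :
    Surjective (adicFiber.proj (φ := φ) (y := y) m) := by
  rintro ⟨a, ha⟩
  obtain ⟨b, hb⟩ := qMap_surjective hφ _ (y.1 (m + 1))
  obtain ⟨z, hz, hza⟩ := exists_qMap_eq_zero_projMap_eq hφ (pow_dvd_pow ℓ m.le_succ)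
    (d := a - projMap (pow_dvd_pow ℓ m.le_succ) b)
    (by rw [map_sub, ha, ← projMap_qMap, hb, y.2 m, sub_self])
  refine ⟨⟨b + z, by rw [map_add, hb, hz, add_zero]⟩, Subtype.ext ?_⟩
  simp only [adicFiber.proj, map_add, hza, add_sub_cancel]

theorem adicMap_surjective (hφ : Surjective φ) : Surjective (adicMap ℓ φ) := fun y =>
  let ⟨a₀, ha₀⟩ := qMap_surjective hφ _ (y.1 0)
  let ⟨a, ha⟩ := exists_compatible_seq_of_surjective _ (adicFiber.proj_surjective hφ) ⟨a₀, ha₀⟩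
  exists_adicMap_eq_of_compatible a ha

end Completion

section Torsion

theorem AddMonoidHom.finite_preimage_singleton {G H : Type*} [AddGroup G] [AddGroup H]
    (φ : G →+ H) [Finite φ.ker] (y : H) : (φ ⁻¹' {y}).Finite := by
  by_cases hy : y ∈ Set.range φ
  · obtain ⟨a, rfl⟩ := hy
    exact Finite.of_equiv _ (φ.fiberEquivKer a).symm
  · simp [Set.preimage_singleton_eq_empty.mpr hy]

variable {B E : Type*} [AddCommGroup B] [AddCommGroup E]

theorem finite_pow_smul_eq_zero {n : ℕ} (h : {x : E | n • x = 0}.Finite) (m : ℕ) :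
    {x : E | n ^ m • x = 0}.Finite := by
  induction m with
  | zero => simp
  | succ m ih =>
    have : Finite (nsmulAddMonoidHom (α := E) n).ker := h.to_subtype
    have hpre : {x : E | n ^ (m + 1) • x = 0} = (n • ·) ⁻¹' {x | n ^ m • x = 0} := by
      ext x; simp [pow_succ, mul_smul]
    rw [hpre]
    exact ih.preimage' fun y _ => (nsmulAddMonoidHom n).finite_preimage_singleton y

/-- The kernel of `K/nK → B/nB`, for `K = ker g`, is `(K ∩ nB)/nK`, the image of the
`n`-torsion of `E` under `g b ↦ n • b`. -/
theorem finite_ker_qMap_ker_subtype {g : B →+ E} (hg : Surjective g) {n : ℕ}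
    (h : {x : E | n • x = 0}.Finite) : Finite (qMap g.ker.subtype n).ker := by
  have : Finite {x : E // n • x = 0} := h.to_subtype
  let lift (x : {x : E // n • x = 0}) : g.ker ⧸ nSub g.ker n :=
    QuotientAddGroup.mk ⟨n • surjInv hg x.1, by simp [surjInv_eq hg, x.2]⟩
  refine (Set.Finite.subset (Set.finite_range lift) fun c hc => ?_).to_subtype
  induction c using QuotientAddGroup.induction_on with | H k => ?_
  obtain ⟨b, hb : n • b = k⟩ := (QuotientAddGroup.eq_zero_iff _).mp hc
  have hgb : n • g b = 0 := by rw [← map_nsmul, hb]; exact k.2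
  refine ⟨⟨g b, hgb⟩, QuotientAddGroup.eq_iff_sub_mem.mpr ?_⟩
  have hker : surjInv hg (g b) - b ∈ g.ker := by simp [surjInv_eq hg]
  exact ⟨⟨_, hker⟩, Subtype.ext (by simp [smul_sub, hb])⟩

end Torsion

theorem exists_adicMap_ker_subtype_eq {B E : Type*} [AddCommGroup B] [AddCommGroup E]
    {ℓ : ℕ} {g : B →+ E} (hg : Surjective g) (htors : {x : E | ℓ • x = 0}.Finite)
    {y : AdicComp ℓ B} (hy : adicMap ℓ g y = 0) : ∃ k, adicMap ℓ g.ker.subtype k = y := by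
  have (m : ℕ) : Finite (adicFiber ℓ g.ker.subtype y m) :=
    have := finite_ker_qMap_ker_subtype hg (finite_pow_smul_eq_zero htors m)
    (AddMonoidHom.finite_preimage_singleton _ _).to_subtype
  have (m : ℕ) : Nonempty (adicFiber ℓ g.ker.subtype y m) :=
    let ⟨c, hc⟩ := exists_qMap_eq_of_qMap_eq_zero g.exact_ker_subtype hg
      (congrArg (fun z : AdicComp ℓ E => z.1 m) hy)
    ⟨⟨c, hc⟩⟩
  obtain ⟨k, hk⟩ :=
    exists_compatible_seq_of_finite (adicFiber.proj (φ := g.ker.subtype) (y := y))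
  exact exists_adicMap_eq_of_compatible k hk

theorem statement_1_general {A B E : Type*} [AddCommGroup A] [AddCommGroup B] [AddCommGroup E]
    (ℓ : ℕ) (f : A →+ B) (g : B →+ E)
    (hfg : Function.Exact ⇑f ⇑g) (hg : Function.Surjective ⇑g)
    (htors : {x : E | ℓ • x = 0}.Finite) :
    Function.Surjective ⇑(adicMap ℓ g) ∧
      Function.Exact ⇑(adicMap ℓ f) ⇑(adicMap ℓ g) := by
  let f' : A →+ g.ker := f.codRestrict g.ker fun a => hfg.apply_apply_eq_zero a
  have hf' : Surjective f' := fun k =>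
    let ⟨a, ha⟩ := (hfg k).mp k.2
    ⟨a, Subtype.ext ha⟩
  refine ⟨adicMap_surjective hg, fun y => ⟨fun hy => ?_, ?_⟩⟩
  · obtain ⟨k, rfl⟩ := exists_adicMap_ker_subtype_eq hg htors hy
    obtain ⟨x, rfl⟩ := adicMap_surjective hf' k
    refine ⟨x, ?_⟩
    rw [adicMap_comp_apply, show g.ker.subtype.comp f' = f from rfl]
  · rintro ⟨x, rfl⟩
    rw [adicMap_comp_apply, hfg.addMonoidHom_comp_eq_zero, adicMap_zero_apply]

/-- If `A → B → E → 0` is an exact sequence of abelian groups, `ℓ` is a prime and the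
ℓ-torsion subgroup of `E` is finite, then the induced sequence
`A^(ℓ) → B^(ℓ) → E^(ℓ) → 0` of ℓ-adic completions is exact: the second map is
surjective and the image of the first map equals the kernel of the second. -/
theorem statement_1 {A B E : Type*} [AddCommGroup A] [AddCommGroup B] [AddCommGroup E]
    (ℓ : ℕ) (hℓ : ℓ.Prime) (f : A →+ B) (g : B →+ E)
    (hfg : Function.Exact ⇑f ⇑g) (hg : Function.Surjective ⇑g)
    (htors : {x : E | ℓ • x = 0}.Finite) :
    Function.Surjective ⇑(adicMap ℓ g) ∧
      Function.Exact ⇑(adicMap ℓ f) ⇑(adicMap ℓ g) :=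
  statement_1_general ℓ f g hfg hg htors
end

section
/- Every topological abelian group A in the class ℰ is topologically isomorphic to a direct product P' × B, where P' is a profinite abelian group and B is a finitely generated abelian group equipped with the discrete topology. (Structure statement for the class ℰ proved in Section 3: replacing F by F/F_tors one may assume F ≅ ℤ^r is free, the projection then admits a continuous section, giving the product decomposition.) -/
/-- A topological abelian group `A` belongs to the class ℰ if it admits a closed
subgroup `P` which is profinite (compact, Hausdorff and totally disconnected) such
that the quotient `A ⧸ P`, with the quotient topology, is discrete and finitely
generated. -/
def IsClassE (A : Type*) [AddCommGroup A] [TopologicalSpace A] : Prop :=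
  ∃ P : AddSubgroup A, IsClosed (P : Set A) ∧ CompactSpace P ∧ T2Space P ∧
    TotallyDisconnectedSpace P ∧ DiscreteTopology (A ⧸ P) ∧ AddGroup.FG (A ⧸ P)

universe u

/-!
Let `A₁` be the preimage in `A` of the torsion subgroup of `A ⧸ P`. That torsion subgroup is
finite, so `A₁` is a finite union of cosets of `P`, hence compact; it is totally disconnected
because `A` is, being an extension of the discrete group `A ⧸ P` by `P`. The quotient
`A ⧸ A₁ ≅ (A ⧸ P) ⧸ torsion` is finitely generated and torsion-free, hence free, so the
projection onto it has a homomorphic section, continuous because the target is discrete, and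
this section splits `A` topologically as `A₁ × (A ⧸ A₁)`.
-/

open AddCommGroup (torsion)

theorem AddCommGroup.finite_torsion (G : Type*) [AddCommGroup G] [AddGroup.FG G] :
    Finite (torsion G) := by
  have : Module.Finite ℤ G := Module.Finite.iff_addGroup_fg.mpr ‹_›
  have : Module.Finite ℤ (Submodule.torsion ℤ G) :=
    Module.Finite.iff_fg.mpr (IsNoetherian.noetherian _)
  have : Finite (Submodule.torsion ℤ G) :=
    Module.finite_of_fg_torsion _ Submodule.torsion_isTorsion
  rwa [← Submodule.torsion_int]

instance (G : Type*) [AddCommGroup G] [AddGroup.FG G] : Module.Free ℤ (G ⧸ torsion G) :=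
  have : Module.Finite ℤ G := Module.Finite.iff_addGroup_fg.mpr ‹_›
  inferInstance

namespace QuotientAddGroup

variable {A : Type*} [AddGroup A] [TopologicalSpace A]

theorem isCompact_preimage_mk [ContinuousAdd A] {P : AddSubgroup A} (hP : IsCompact (P : Set A))
    {T : Set (A ⧸ P)} (hT : T.Finite) : IsCompact ((↑) ⁻¹' T : Set A) := by
  have hT' : ((↑) : A → A ⧸ P) '' (Quotient.out '' T) = T := by
    simp [Set.image_image]
  rw [← hT', preimage_image_mk_eq_add]
  exact (hT.image _).isCompact.add hP

theorem totallyDisconnectedSpace_of_quotient [ContinuousAdd A] {N : AddSubgroup A}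
    [TotallyDisconnectedSpace N] [TotallyDisconnectedSpace (A ⧸ N)] :
    TotallyDisconnectedSpace A := by
  refine ⟨fun S _ hS x hx y hy => ?_⟩
  have hcoset : ∀ z ∈ S, -x + z ∈ N := fun z hz => QuotientAddGroup.eq.mp <|
    (hS.image _ continuous_mk.continuousOn).subsingleton (Set.mem_image_of_mem _ hx)
      (Set.mem_image_of_mem _ hz)
  have := totallyDisconnectedSpace_subtype_iff.mp ‹_› ((-x + ·) '' S)
    (Set.image_subset_iff.mpr hcoset) (hS.image _ (continuous_const_add _).continuousOn)
    (Set.mem_image_of_mem _ hx) (Set.mem_image_of_mem _ hy)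
  exact neg_add_eq_zero.mp (by simpa using this.symm)

end QuotientAddGroup

namespace AddMonoidHom

theorem exists_rightInverse_of_surjective {A B : Type*} [AddCommGroup A]
    [AddCommGroup B] [Module.Projective ℤ B] (f : A →+ B) (hf : Function.Surjective f) :
    ∃ σ : B →+ A, Function.RightInverse σ f := by
  obtain ⟨σ, hσ⟩ :=
    f.toIntLinearMap.exists_rightInverse_of_surjective (LinearMap.range_eq_top.mpr hf)
  exact ⟨σ.toAddMonoidHom, fun b => LinearMap.congr_fun hσ b⟩

section Topology

variable {A B : Type*} [AddCommGroup A] [TopologicalSpace A] [IsTopologicalAddGroup A]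
  [AddGroup B] [TopologicalSpace B]

noncomputable def kerProdEquivOfRightInverse (f : A →+ B) (σ : B →+ A)
    (hσ : Function.RightInverse σ f) (hf : Continuous f) (hσc : Continuous σ) :
    A ≃ₜ+ f.ker × B where
  toFun a := (⟨a - σ (f a), by simp [mem_ker, hσ (f a)]⟩, f a)
  invFun p := p.1 + σ p.2
  left_inv a := by simp
  right_inv := by
    rintro ⟨⟨p, hp⟩, b⟩
    have : f (p + σ b) = b := by simp [(mem_ker).mp hp, hσ b]
    ext <;> simp [this]
  map_add' a b := by
    ext <;> simp only [map_add, Prod.fst_add, Prod.snd_add, AddSubgroup.coe_add]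
    abel
  continuous_toFun := by fun_prop
  continuous_invFun := by fun_prop

end Topology

end AddMonoidHom

/-- Every topological abelian group in the class ℰ is topologically isomorphic to a
direct product `P × B` of a profinite abelian group `P` and a finitely generated
abelian group `B` equipped with the discrete topology. -/
theorem statement_5 (A : Type u) [AddCommGroup A] [TopologicalSpace A]
    [IsTopologicalAddGroup A] (hA : IsClassE A) :
    ∃ (P : Type u) (_ : AddCommGroup P) (_ : TopologicalSpace P)
      (B : Type u) (_ : AddCommGroup B) (_ : TopologicalSpace B),
      IsTopologicalAddGroup P ∧ CompactSpace P ∧ T2Space P ∧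
      TotallyDisconnectedSpace P ∧ DiscreteTopology B ∧ AddGroup.FG B ∧
      ∃ e : A ≃+ P × B, Continuous ⇑e ∧ Continuous ⇑e.symm := by
  obtain ⟨P, -, hP, -, hPtd, hPdisc, hPfg⟩ := hA
  let f : A →+ (A ⧸ P) ⧸ torsion (A ⧸ P) :=
    (QuotientAddGroup.mk' _).comp (QuotientAddGroup.mk' P)
  have hf : Continuous f := QuotientAddGroup.continuous_mk.comp QuotientAddGroup.continuous_mk
  obtain ⟨σ, hσ⟩ := f.exists_rightInverse_of_surjective
    ((QuotientAddGroup.mk'_surjective _).comp (QuotientAddGroup.mk'_surjective P))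
  have : DiscreteTopology ((A ⧸ P) ⧸ torsion (A ⧸ P)) :=
    QuotientAddGroup.discreteTopology (isOpen_discrete _)
  have : TotallyDisconnectedSpace A :=
    QuotientAddGroup.totallyDisconnectedSpace_of_quotient (N := P)
  have hker : (f.ker : Set A) = (↑) ⁻¹' (torsion (A ⧸ P) : Set (A ⧸ P)) := by
    ext; simp [f]
  have : Finite (torsion (A ⧸ P)) := AddCommGroup.finite_torsion _
  have : CompactSpace f.ker := isCompact_iff_compactSpace.mp <| hker ▸
    QuotientAddGroup.isCompact_preimage_mk (isCompact_iff_compactSpace.mpr hP) (Set.toFinite _)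
  let e := f.kerProdEquivOfRightInverse σ hσ hf continuous_of_discreteTopology
  exact ⟨f.ker, _, _, _, _, _, inferInstance, inferInstance, inferInstance, inferInstance,
    inferInstance, inferInstance, e.toAddEquiv, e.continuous, e.symm.continuous⟩
end

section
/- If P is a profinite abelian topological group (compact, Hausdorff and totally disconnected), then the natural map P → P_∧ := lim_{n≥1} P/nP is an isomorphism of abelian groups. (Claim 'If A is profinite, then A = A_∧ = A^∧' of Section 3.) -/
/-- The completion `A_∧ = lim_{n ≥ 1} A/nA`, the inverse limit over positive integers
ordered by divisibility, as the subgroup of compatible families. -/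
def nCompl (A : Type*) [AddCommGroup A] :
    AddSubgroup (∀ n : ℕ+, A ⧸ nSub A (n : ℕ)) where
  carrier := {f | ∀ (n m : ℕ+) (h : (n : ℕ) ∣ (m : ℕ)), projMap h (f m) = f n}
  zero_mem' := fun _n _m _h => map_zero _
  add_mem' := by
    intro f g hf hg n m h
    simp only [Pi.add_apply, map_add, hf n m h, hg n m h]
  neg_mem' := by
    intro f hf n m h
    simp only [Pi.neg_apply, map_neg, hf n m h]

/-- The natural map `A → A_∧` sending `a` to its family of residues. -/
def toCompl (A : Type*) [AddCommGroup A] : A →+ ↥(nCompl A) where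
  toFun a := ⟨fun _n => QuotientAddGroup.mk a, fun _n _m _h => rfl⟩
  map_zero' := rfl
  map_add' _a _b := rfl

/-
Injectivity: an element lying in every `nP` lies in every open subgroup `H`, since `H` has
finite index `m` and so contains `mP`; in a profinite group the open subgroups separate `0`
from any other point. Surjectivity: a compatible family `f` defines the closed cosets
`{a | a ≡ f n mod nP}` (closed because `nP` is compact), which form a directed family of
nonempty closed sets, so by compactness they have a common point.
-/

section Algebraic

variable {A : Type*} [AddCommGroup A]

lemma coe_nSub (n : ℕ) : (nSub A n : Set A) = Set.range (n • · : A → A) := rfl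

lemma nSub_index_le (H : AddSubgroup A) : nSub A H.index ≤ H := by
  rintro _ ⟨a, rfl⟩
  exact H.nsmul_index_mem a

lemma toCompl_eq_zero_iff {a : A} : toCompl A a = 0 ↔ ∀ n : ℕ+, a ∈ nSub A n :=
  Subtype.ext_iff.trans <| funext_iff.trans <| forall_congr' fun _ => QuotientAddGroup.eq_zero_iff a

lemma projMap_mk {n m : ℕ} (h : n ∣ m) (a : A) :
    projMap h (a : A ⧸ nSub A m) = (a : A ⧸ nSub A n) :=
  rfl

end Algebraic

section Topological

variable {P : Type*} [AddCommGroup P] [TopologicalSpace P] [IsTopologicalAddGroup P]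
  [CompactSpace P]

lemma isClosed_nSub [T2Space P] (n : ℕ) : IsClosed (nSub P n : Set P) := by
  rw [coe_nSub]
  exact (isCompact_range (continuous_nsmul n)).isClosed

lemma eq_zero_of_forall_mem_nSub [TotallyDisconnectedSpace P] {a : P}
    (ha : ∀ n : ℕ+, a ∈ nSub P n) : a = 0 := by
  by_contra hne
  obtain ⟨H, hH⟩ := ProfiniteGrp.exist_openNormalAddSubgroup_sub_open_nhds_of_zero
    isOpen_compl_singleton (Ne.symm hne)
  have : Finite (P ⧸ H.toAddSubgroup) :=
    AddSubgroup.quotient_finite_of_isOpen _ H.isOpen'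
  have hindex : 0 < H.toAddSubgroup.index := Nat.pos_of_ne_zero AddSubgroup.index_ne_zero_of_finite
  exact hH (nSub_index_le _ (ha ⟨_, hindex⟩)) rfl

lemma toCompl_surjective [T2Space P] : Function.Surjective (toCompl P) := by
  rintro ⟨f, hf⟩
  let C : ℕ+ → Set P := fun n => (QuotientAddGroup.mk ⁻¹' {f n} : Set P)
  have hC_nonempty (n : ℕ+) : (C n).Nonempty := QuotientAddGroup.mk_surjective (f n)
  have hC_closed (n : ℕ+) : IsClosed (C n) := by
    have : IsClosed (nSub P n : Set P) := isClosed_nSub n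
    exact isClosed_singleton.preimage QuotientAddGroup.continuous_mk
  have hC_antitone {n m : ℕ+} (h : (n : ℕ) ∣ m) : C m ⊆ C n := by
    intro a (ha : (a : P ⧸ nSub P m) = f m)
    change (a : P ⧸ nSub P n) = f n
    rw [← projMap_mk h, ha, hf n m h]
  have hC_directed : Directed (· ⊇ ·) C := fun n m =>
    ⟨n * m, hC_antitone (dvd_mul_right _ _), hC_antitone (dvd_mul_left _ _)⟩
  obtain ⟨a, ha⟩ := IsCompact.nonempty_iInter_of_directed_nonempty_isCompact_isClosed
    C hC_directed hC_nonempty (fun n => (hC_closed n).isCompact) hC_closed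
  exact ⟨a, Subtype.ext <| funext <| Set.mem_iInter.mp ha⟩

end Topological

/-- If `P` is a profinite abelian topological group, then the natural map
`P → P_∧ = lim_{n ≥ 1} P/nP` is an isomorphism of abelian groups. -/
theorem statement_6 (P : Type*) [AddCommGroup P] [TopologicalSpace P]
    [IsTopologicalAddGroup P] [CompactSpace P] [T2Space P] [TotallyDisconnectedSpace P] :
    Function.Bijective ⇑(toCompl P) :=
  ⟨(injective_iff_map_eq_zero _).mpr fun _ ha =>
    eq_zero_of_forall_mem_nSub (toCompl_eq_zero_iff.mp ha), toCompl_surjective⟩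
end

section
/- Let A be a topological abelian group in the class ℰ and let H be a closed subgroup of A. Then H, equipped with the subspace topology, is again in the class ℰ. (Stability claim for the class ℰ of Section 3.) -/
open Topology

theorem AddGroup.fg_of_injective {G K : Type*} [AddCommGroup G] [AddCommGroup K]
    [AddGroup.FG K] (f : G →+ K) (hf : Function.Injective f) : AddGroup.FG G := by
  -- finite generation passes to submodules since `ℤ` is Noetherian
  have : Module.Finite ℤ K := Module.Finite.iff_addGroup_fg.mpr ‹_›
  exact Module.Finite.iff_addGroup_fg.mp (Module.Finite.of_injective f.toIntLinearMap hf)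

theorem AddSubgroup.fg_quotient_addSubgroupOf {A : Type*} [AddCommGroup A] (P H : AddSubgroup A)
    [AddGroup.FG (A ⧸ P)] : AddGroup.FG (H ⧸ P.addSubgroupOf H) := by
  let φ : H →+ A ⧸ P := (QuotientAddGroup.mk' P).comp H.subtype
  have hker : P.addSubgroupOf H = φ.ker := by
    rw [← AddMonoidHom.comap_ker, QuotientAddGroup.ker_mk']
    rfl
  exact AddGroup.fg_of_injective _
    ((QuotientAddGroup.injective_lift_iff (N := P.addSubgroupOf H) φ hker.le).mpr hker)

theorem AddSubgroup.isClosedEmbedding_addSubgroupOf {A : Type*} [AddGroup A] [TopologicalSpace A]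
    {H : AddSubgroup A} (hH : IsClosed (H : Set A)) (K : AddSubgroup A) :
    IsClosedEmbedding (fun x : K.addSubgroupOf H ↦ (⟨x.1, x.2⟩ : K)) :=
  (K : Set A).restrictPreimage_isClosedEmbedding hH.isClosedEmbedding_subtypeVal

/-- A closed subgroup of a topological abelian group in the class ℰ is again in the
class ℰ (with the subspace topology). -/
theorem statement_8 (A : Type*) [AddCommGroup A] [TopologicalSpace A]
    [IsTopologicalAddGroup A] (hA : IsClassE A) (H : AddSubgroup A)
    (hH : IsClosed (H : Set A)) :
    IsClassE H := by
  obtain ⟨P, hP_closed, _, _, _, hP_discrete, _⟩ := hA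
  have hP_open : IsOpen (P : Set A) := QuotientAddGroup.discreteTopology_iff.mp hP_discrete
  have hPH := AddSubgroup.isClosedEmbedding_addSubgroupOf hH P
  exact ⟨P.addSubgroupOf H, hP_closed.preimage continuous_subtype_val, hPH.compactSpace,
    hPH.isEmbedding.t2Space,
    hPH.isEmbedding.isTotallyDisconnected_range.mp
      (isTotallyDisconnected_of_totallyDisconnectedSpace _),
    QuotientAddGroup.discreteTopology (hP_open.preimage continuous_subtype_val),
    P.fg_quotient_addSubgroupOf H⟩
end

section
/- Let A be a topological abelian group in the class ℰ and let H be a closed subgroup of A. Then the quotient A/H, equipped with the quotient topology, is again in the class ℰ. (Stability claim for the class ℰ of Section 3.) -/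
open Topology Function

@[to_additive]
theorem Subgroup.isOpen_map_of_isQuotientMap {G K : Type*} [Group G] [TopologicalSpace G]
    [SeparatelyContinuousMul G] [Group K] [TopologicalSpace K] {f : G →* K}
    (hf : IsQuotientMap f) {U : Subgroup G} (hU : IsOpen (U : Set G)) :
    IsOpen (U.map f : Set K) := by
  rw [← hf.isOpen_preimage, ← coe_comap, comap_map_eq]
  exact isOpen_mono le_sup_left hU

@[to_additive]
theorem MonoidHom.totallyDisconnectedSpace_of_surjective {G K : Type*} [Group G]
    [TopologicalSpace G] [IsTopologicalGroup G] [CompactSpace G] [TotallyDisconnectedSpace G]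
    [Group K] [TopologicalSpace K] [SeparatelyContinuousMul K] [T2Space K] (f : G →* K)
    (hf : Continuous f) (hsurj : Surjective f) : TotallyDisconnectedSpace K := by
  refine totallyDisconnectedSpace_iff_connectedComponent_one.mpr
    (Set.eq_singleton_iff_unique_mem.mpr ⟨mem_connectedComponent, fun k hk => ?_⟩)
  by_contra hk1
  obtain ⟨U, hUk⟩ := ProfiniteGrp.exist_openNormalSubgroup_sub_open_nhds_of_one
    (isClosed_singleton.preimage hf).isOpen_compl
    (show (1 : G) ∉ f ⁻¹' {k} by simpa [eq_comm] using hk1)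
  have hUopen : IsOpen (U.map f : Set K) :=
    Subgroup.isOpen_map_of_isQuotientMap (hf.isClosedMap.isQuotientMap hf hsurj) U.isOpen'
  obtain ⟨u, hu, rfl⟩ := IsClopen.connectedComponent_subset
    ⟨Subgroup.isClosed_of_isOpen _ hUopen, hUopen⟩ (one_mem _) hk
  exact hUk hu rfl

/-- The quotient of a topological abelian group in the class ℰ by a closed subgroup,
equipped with the quotient topology, is again in the class ℰ. -/
theorem statement_9 (A : Type*) [AddCommGroup A] [TopologicalSpace A]
    [IsTopologicalAddGroup A] (hA : IsClassE A) (H : AddSubgroup A)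
    (hH : IsClosed (H : Set A)) :
    IsClassE (A ⧸ H) := by
  obtain ⟨P, -, hPcompact, -, _, hPdisc, _⟩ := hA
  set π := QuotientAddGroup.mk' H
  set Q := P.map π
  have hQcompact : IsCompact (Q : Set (A ⧸ H)) :=
    (isCompact_iff_compactSpace.mpr hPcompact).image QuotientAddGroup.continuous_mk
  have hQopen : IsOpen (Q : Set (A ⧸ H)) :=
    QuotientAddGroup.isOpenMap_coe _ (QuotientAddGroup.discreteTopology_iff.mp hPdisc)
  have : CompactSpace Q := isCompact_iff_compactSpace.mp hQcompact
  refine ⟨Q, hQcompact.isClosed, this, inferInstance, ?_,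
    QuotientAddGroup.discreteTopology hQopen, ?_⟩
  · exact (π.addSubgroupMap P).totallyDisconnectedSpace_of_surjective
      ((QuotientAddGroup.continuous_mk.comp continuous_subtype_val).subtype_mk _)
      (π.addSubgroupMap_surjective P)
  · exact AddGroup.fg_of_surjective <| QuotientAddGroup.map_surjective_of_surjective P Q π
      (QuotientAddGroup.mk_surjective.comp QuotientAddGroup.mk_surjective) (P.le_comap_map π)
end

section
/- Let B be a topological abelian group and A a closed subgroup of B such that A, with the subspace topology, is in the class ℰ, and such that the quotient B/A, with the quotient topology, is discrete and finitely generated. Then B is in the class ℰ. (Stability of ℰ under topological extension by a finitely generated discrete group, Section 3.) -/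
/-!
Let `P ≤ A` witness `IsClassE A`. Since `B ⧸ A` and `A ⧸ P` are discrete, `A` is open in `B`
and `P` is open in `A`, so the image of `P` in `B` is an open, hence closed, subgroup of `B`,
homeomorphic to `P`. The quotient of `B` by it is an extension of `B ⧸ A` by `A ⧸ P`, hence
finitely generated.
-/

namespace AddSubgroup

section Topology

variable {G : Type*} [AddGroup G] [TopologicalSpace G]

noncomputable def homeomorphMapSubtype (H : AddSubgroup G) (K : AddSubgroup H) :
    K ≃ₜ K.map H.subtype :=
  (K.equivMapOfInjective H.subtype H.subtype_injective).toEquiv.toHomeomorphOfIsInducing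
    ((Topology.IsInducing.subtypeVal.comp Topology.IsInducing.subtypeVal).codRestrict _)

lemma isOpen_map_subtype {H : AddSubgroup G} {K : AddSubgroup H}
    (hH : IsOpen (H : Set G)) (hK : IsOpen (K : Set H)) : IsOpen (K.map H.subtype : Set G) := by
  rw [coe_map]
  exact hH.isOpenMap_subtype_val _ hK

end Topology

lemma fg_quotient_map_subtype {G : Type*} [AddCommGroup G] {H : AddSubgroup G}
    (K : AddSubgroup H) (hK : AddGroup.FG (H ⧸ K)) (hH : AddGroup.FG (G ⧸ H)) :
    AddGroup.FG (G ⧸ K.map H.subtype) := by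
  let f := (QuotientAddGroup.map K (K.map H.subtype) H.subtype
    fun k hk => ⟨k, hk, rfl⟩).toIntLinearMap
  let g := (QuotientAddGroup.map _ H (AddMonoidHom.id G) (map_subtype_le K)).toIntLinearMap
  have hexact : Function.Exact f g := by
    intro y
    induction y using QuotientAddGroup.induction_on with
    | H b =>
      constructor
      · intro hb
        exact ⟨QuotientAddGroup.mk ⟨b, (QuotientAddGroup.eq_zero_iff b).mp hb⟩, rfl⟩
      · rintro ⟨x, hx⟩
        rw [← hx]
        induction x using QuotientAddGroup.induction_on with
        | H a => exact (QuotientAddGroup.eq_zero_iff _).mpr a.2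
  have hsurj : Function.Surjective g :=
    Function.Surjective.of_comp (g := QuotientAddGroup.mk) QuotientAddGroup.mk_surjective
  rw [← Module.Finite.iff_addGroup_fg] at hK hH ⊢
  exact Module.Finite.of_exact hexact hsurj

end AddSubgroup

theorem statement_10_general (B : Type*) [AddCommGroup B] [TopologicalSpace B]
    [IsTopologicalAddGroup B] (A : AddSubgroup B)
    (hAE : IsClassE A) (hdisc : DiscreteTopology (B ⧸ A)) (hfg : AddGroup.FG (B ⧸ A)) :
    IsClassE B := by
  obtain ⟨P, -, _, _, _, hPdisc, hPfg⟩ := hAE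
  have hPopen : IsOpen (P.map A.subtype : Set B) :=
    AddSubgroup.isOpen_map_subtype (QuotientAddGroup.discreteTopology_iff.mp hdisc)
      (QuotientAddGroup.discreteTopology_iff.mp hPdisc)
  let e := AddSubgroup.homeomorphMapSubtype A P
  exact ⟨P.map A.subtype, AddSubgroup.isClosed_of_isOpen _ hPopen, e.compactSpace, e.t2Space,
    e.totallyDisconnectedSpace, QuotientAddGroup.discreteTopology hPopen,
    AddSubgroup.fg_quotient_map_subtype P hPfg hfg⟩

/-- If `B` is a topological abelian group and `A` is a closed subgroup of `B` which is
in the class ℰ (with the subspace topology), and the quotient `B/A` (with the quotient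
topology) is discrete and finitely generated, then `B` is in the class ℰ. -/
theorem statement_10 (B : Type*) [AddCommGroup B] [TopologicalSpace B]
    [IsTopologicalAddGroup B] (A : AddSubgroup B) (hA : IsClosed (A : Set B))
    (hAE : IsClassE A) (hdisc : DiscreteTopology (B ⧸ A)) (hfg : AddGroup.FG (B ⧸ A)) :
    IsClassE B :=
  statement_10_general B A hAE hdisc hfg
end
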